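/- Let A > 0, C > 0, β > 0, ξ₁ > 0, ξ₂ > 0, and set q = A/(2ξ₁ + A), d = ξ₂/A + ξ₂/(2ξ₁), and B = C·A/ξ₁. Then the first-order condition [2q(C+1) − 1]·∫₀^d β·y²·e^{−βy} dy + d²·(B − 1)·e^{−βd} = 0 holds if and only if B = G(βd), where G = g∘e with e(x) = (2/x²)·eˣ − (1 + 2/x + 2/x²) and g(x) = ½·( −[2C−1+x(2C+1)] + √([2C−1+x(2C+1)]² + 8C(x+1)) ). -/

import Mathlib

/-!
Since `β y² e^{-βy}` has antiderivative `-(y² + 2y/β + 2/β²) e^{-βy}`, the integral equals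
`d² e^{-βd} e(βd)`. With `B = CA/ξ₁` one has `2q(C+1) - 1 = (B(2C+1) - 2C)/(B + 2C)`, so after dividing
by the positive factor `d² e^{-βd}/(B + 2C)` the first-order condition becomes the quadratic
`B² + (2C - 1 + e(2C+1)) B - 2C(e+1) = 0` in `B`. As `e(x) + 1 = 2(eˣ - 1 - x)/x² > 0`, its constant
term is negative, so it has exactly one positive root, which is `g(e)`.
-/

noncomputable def eFun (x : ℝ) : ℝ :=
  2 / x ^ 2 * Real.exp x - (1 + 2 / x + 2 / x ^ 2)

noncomputable def gFun (C x : ℝ) : ℝ :=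
  (1 / 2) * (-(2 * C - 1 + x * (2 * C + 1)) +
    Real.sqrt ((2 * C - 1 + x * (2 * C + 1)) ^ 2 + 8 * C * (x + 1)))

noncomputable def GFun (C x : ℝ) : ℝ := gFun C (eFun x)

open Real

lemma eFun_add_one_pos {x : ℝ} (hx : x ≠ 0) : 0 < eFun x + 1 := by
  have hrepr : eFun x + 1 = 2 / x ^ 2 * (exp x - x - 1) := by
    rw [eFun]; field_simp; ring
  have hexp : x + 1 < exp x := add_one_lt_exp hx
  rw [hrepr]
  exact mul_pos (by positivity) (by linarith)

lemma quadratic_eq_zero_iff_eq_pos_root {P Q B : ℝ} (hQ : 0 ≤ Q) (hB : 0 < B) :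
    B ^ 2 + P * B - Q = 0 ↔ B = (-P + √(P ^ 2 + 4 * Q)) / 2 := by
  have hdisc : 0 ≤ P ^ 2 + 4 * Q := by positivity
  constructor
  · intro h
    have hpos : 0 ≤ 2 * B + P := by nlinarith
    have hsq : P ^ 2 + 4 * Q = (2 * B + P) ^ 2 := by linear_combination (-4) * h
    rw [hsq, sqrt_sq hpos]
    ring
  · intro h
    have hs := sq_sqrt hdisc
    rw [h]
    linear_combination hs / 4

lemma eq_gFun_iff {B C E : ℝ} (hB : 0 < B) (hC : 0 ≤ C) (hE : 0 ≤ E + 1) :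
    (B * (2 * C + 1) - 2 * C) / (B + 2 * C) * E + (B - 1) = 0 ↔ B = gFun C E := by
  have hBC : 0 < B + 2 * C := by positivity
  have hfactor : (B * (2 * C + 1) - 2 * C) / (B + 2 * C) * E + (B - 1) =
      (B ^ 2 + (2 * C - 1 + E * (2 * C + 1)) * B - 2 * C * (E + 1)) / (B + 2 * C) := by
    field_simp
    ring
  rw [hfactor, div_eq_zero_iff, or_iff_left hBC.ne',
    quadratic_eq_zero_iff_eq_pos_root (by positivity) hB, gFun]
  ring_nf

lemma integral_mul_sq_mul_exp_neg {β : ℝ} (hβ : β ≠ 0) (d : ℝ) :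
    ∫ y in (0 : ℝ)..d, β * y ^ 2 * exp (-β * y) =
      2 / β ^ 2 - exp (-(β * d)) * (d ^ 2 + 2 * d / β + 2 / β ^ 2) := by
  have hderiv : ∀ y ∈ Set.uIcc (0 : ℝ) d,
      HasDerivAt (fun y => -(y ^ 2 + 2 * y / β + 2 / β ^ 2) * exp (-β * y))
        (β * y ^ 2 * exp (-β * y)) y := by
    intro y _
    have hexp : HasDerivAt (fun y => exp (-β * y)) (exp (-β * y) * -β) y := by
      simpa using ((hasDerivAt_id y).const_mul (-β)).exp
    have hpoly : HasDerivAt (fun y : ℝ => -(y ^ 2 + 2 * y / β + 2 / β ^ 2))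
        (-(2 * y + 2 / β)) y := by
      refine HasDerivAt.neg ?_
      simpa using ((hasDerivAt_pow 2 y).add
        (((hasDerivAt_id y).const_mul 2).div_const β)).add_const (2 / β ^ 2)
    refine (hpoly.mul hexp).congr_deriv ?_
    field_simp
    ring
  have hint : Continuous fun y : ℝ => β * y ^ 2 * exp (-β * y) := by fun_prop
  rw [intervalIntegral.integral_eq_sub_of_hasDerivAt hderiv (hint.intervalIntegrable 0 d)]
  norm_num
  ring

lemma integral_mul_sq_mul_exp_neg_eq_eFun {β d : ℝ} (hβ : β ≠ 0) (hd : d ≠ 0) :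
    ∫ y in (0 : ℝ)..d, β * y ^ 2 * exp (-β * y) = d ^ 2 * exp (-(β * d)) * eFun (β * d) := by
  rw [integral_mul_sq_mul_exp_neg hβ, eFun]
  have hcancel : exp (-(β * d)) * exp (β * d) = 1 := by rw [← exp_add]; simp
  field_simp
  linear_combination (-2) * hcancel

/-- With q = A/(2ξ₁+A), d = ξ₂/A + ξ₂/(2ξ₁), B = C·A/ξ₁,
the first-order condition
[2q(C+1) − 1]·∫₀^d β y² e^{−βy} dy + d²(B − 1) e^{−βd} = 0 holds iff B = G(βd). -/
theorem stmt_8 (A C β ξ₁ ξ₂ : ℝ) (hA : 0 < A) (hC : 0 < C) (hβ : 0 < β)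
    (hξ₁ : 0 < ξ₁) (hξ₂ : 0 < ξ₂) :
    ((2 * (A / (2 * ξ₁ + A)) * (C + 1) - 1) *
        (∫ y in (0 : ℝ)..(ξ₂ / A + ξ₂ / (2 * ξ₁)), β * y ^ 2 * Real.exp (-β * y)) +
      (ξ₂ / A + ξ₂ / (2 * ξ₁)) ^ 2 * (C * A / ξ₁ - 1) *
        Real.exp (-β * (ξ₂ / A + ξ₂ / (2 * ξ₁))) = 0)
      ↔ C * A / ξ₁ = GFun C (β * (ξ₂ / A + ξ₂ / (2 * ξ₁))) := by
  set d : ℝ := ξ₂ / A + ξ₂ / (2 * ξ₁)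
  set B : ℝ := C * A / ξ₁
  have hd : 0 < d := by positivity
  have hB : 0 < B := by positivity
  have hq : 2 * (A / (2 * ξ₁ + A)) * (C + 1) - 1 = (B * (2 * C + 1) - 2 * C) / (B + 2 * C) := by
    simp only [B]
    field_simp
    ring
  have hfactor : ∀ t : ℝ, t * (d ^ 2 * exp (-(β * d)) * eFun (β * d)) +
      d ^ 2 * (B - 1) * exp (-(β * d)) = d ^ 2 * exp (-(β * d)) * (t * eFun (β * d) + (B - 1)) :=
    fun t => by ring
  rw [integral_mul_sq_mul_exp_neg_eq_eFun hβ.ne' hd.ne', neg_mul, hq, hfactor,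
    mul_eq_zero, or_iff_right (by positivity), GFun,
    eq_gFun_iff hB hC.le (eFun_add_one_pos (by positivity)).le]
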